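/- For each γ ∈ {α,β}, the set K_γ is a dense subset of the full shift Σ_γ. -/
import Mathlib


open MeasureTheory Topology Filter
open scoped ENNReal NNReal


/-! ### The alphabet of the (M,N) Dyck–Motzkin shift -/

/-- The alphabet `D = D_α ∪ D_0 ∪ D_β` of the `(M,N)` Dyck–Motzkin shift:
`la k` is the left bracket `α_k`, `u k` is the unit `1_k`, `ra k` is the right bracket `β_k`. -/
inductive DMSym (M N : ℕ) : Type where
  | la : Fin M → DMSym M N
  | u  : Fin N → DMSym M N
  | ra : Fin M → DMSym M N
deriving DecidableEq

namespace DMSym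

def equivSum (M N : ℕ) : DMSym M N ≃ (Fin M ⊕ Fin N ⊕ Fin M) where
  toFun s := match s with
    | .la k => Sum.inl k
    | .u k => Sum.inr (Sum.inl k)
    | .ra k => Sum.inr (Sum.inr k)
  invFun s := match s with
    | Sum.inl k => .la k
    | Sum.inr (Sum.inl k) => .u k
    | Sum.inr (Sum.inr k) => .ra k
  left_inv s := by cases s <;> rfl
  right_inv s := by rcases s with k | k | k <;> rfl

instance (M N : ℕ) : Fintype (DMSym M N) := Fintype.ofEquiv _ (equivSum M N).symm
instance (M N : ℕ) : TopologicalSpace (DMSym M N) := ⊥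
instance (M N : ℕ) : DiscreteTopology (DMSym M N) := ⟨rfl⟩
instance (M N : ℕ) : MeasurableSpace (DMSym M N) := ⊤
instance (M N : ℕ) : BorelSpace (DMSym M N) := ⟨borel_eq_top_of_discrete.symm⟩

end DMSym

/-- Nonzero elements of the Dyck–Motzkin monoid with zero are represented in normal form:
`some (bs, as)` is the reduced word `β_{bs(0)} ⋯ β_{bs(r)} α_{as(0)} ⋯ α_{as(s)}`
(in particular `some ([], [])` is the unit element `1`); `none` is the zero element `0`. -/
abbrev DyckElem (M : ℕ) := Option (List (Fin M) × List (Fin M))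

/-- Multiplication, in the Dyck–Motzkin monoid with zero, of an element in normal form on
the right by a generator: units are absorbed, a left bracket is appended, and a right bracket
either closes the last left bracket (if the indices match), is appended (if there is no left
bracket to close), or produces the zero element (if the indices do not match). -/
def dyckStep {M N : ℕ} : DyckElem M → DMSym M N → DyckElem M
  | none, _ => none
  | some (bs, as), .la k => some (bs, as ++ [k])
  | some (bs, as), .u _ => some (bs, as)
  | some (bs, as), .ra k =>
      match as.getLast? with
      | none => some (bs ++ [k], [])
      | some j => if j = k then some (bs, as.dropLast) else none

/-- `red w` is the image of the word `w` in the Dyck–Motzkin monoid with zero. -/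
def red {M N : ℕ} (w : List (DMSym M N)) : DyckElem M :=
  w.foldl dyckStep (some ([], []))

/-- The word `x_j x_{j+1} ⋯ x_k` read off a bi-infinite sequence `x`. -/
def wordAt {M N : ℕ} (x : ℤ → DMSym M N) (j k : ℤ) : List (DMSym M N) :=
  (List.range (k + 1 - j).toNat).map fun n => x (j + n)

/-- The `(M,N)` Dyck–Motzkin shift `Σ_D`. -/
def SigmaD (M N : ℕ) : Set (ℤ → DMSym M N) :=
  {x | ∀ j k : ℤ, j < k → red (wordAt x j k) ≠ none}

/-- The left shift `σ`. -/
def shift {A : Type*} : (ℤ → A) → (ℤ → A) := fun x i => x (i + 1)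

/-- The inverse `σ⁻¹` of the left shift. -/
def shiftInv {A : Type*} : (ℤ → A) → (ℤ → A) := fun x i => x (i - 1)

lemma wordAt_shift {M N : ℕ} (x : ℤ → DMSym M N) (j k : ℤ) :
    wordAt (shift x) j k = wordAt x (j + 1) (k + 1) := by
  simp only [wordAt, shift]
  rw [show (k + 1 + 1 - (j + 1) : ℤ) = k + 1 - j by ring]
  exact List.map_congr_left fun n _ => by rw [show (j + n + 1 : ℤ) = j + 1 + n by ring]

lemma shift_mem_SigmaD {M N : ℕ} {x : ℤ → DMSym M N} (hx : x ∈ SigmaD M N) :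
    shift x ∈ SigmaD M N := by
  intro j k hjk
  rw [wordAt_shift]
  exact hx (j + 1) (k + 1) (by omega)

/-- The left shift acting on `Σ_D`. -/
def shiftD (M N : ℕ) : ↥(SigmaD M N) → ↥(SigmaD M N) :=
  fun x => ⟨shift x.val, shift_mem_SigmaD x.property⟩

/-- `G_j(x)`: `1` on left brackets, `-1` on right brackets, `0` on units. -/
def Gfun {M N : ℕ} (x : ℤ → DMSym M N) (j : ℤ) : ℤ :=
  match x j with
  | .la _ => 1
  | .u _ => 0
  | .ra _ => -1

/-- `H_i(x) = Σ_{j=0}^{i-1} G_j(x)` for `i ≥ 1`, `H_i(x) = -Σ_{j=i}^{-1} G_j(x)` for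
`i ≤ -1`, and `H_0(x) = 0`. -/
def Hfun {M N : ℕ} (x : ℤ → DMSym M N) (i : ℤ) : ℤ :=
  if 0 ≤ i then ∑ j ∈ Finset.range i.toNat, Gfun x (j : ℤ)
  else -∑ j ∈ Finset.range (-i).toNat, Gfun x (i + (j : ℤ))

/-- The set `A_0`. -/
def A0set (M N : ℕ) : Set (ℤ → DMSym M N) :=
  SigmaD M N ∩ {x | ∀ i : ℤ,
    (∃ j : ℕ, 1 ≤ j ∧ Hfun x (i + (j : ℤ)) = Hfun x i) ∧
    (∃ j : ℕ, 1 ≤ j ∧ Hfun x (i - (j : ℤ)) = Hfun x i)}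

/-- The set `A_α`. -/
def AalphaSet (M N : ℕ) : Set (ℤ → DMSym M N) :=
  SigmaD M N ∩ {x | Tendsto (Hfun x) atTop atTop ∧ Tendsto (Hfun x) atBot atBot}

/-- The set `A_β`. -/
def AbetaSet (M N : ℕ) : Set (ℤ → DMSym M N) :=
  SigmaD M N ∩ {x | Tendsto (Hfun x) atTop atBot ∧ Tendsto (Hfun x) atBot atTop}

/-- The set `B_α` of sequences in `Σ_D` in which every right bracket is closed. -/
def BalphaSet (M N : ℕ) : Set (ℤ → DMSym M N) :=
  SigmaD M N ∩ {x | ∀ i : ℤ, (∃ k, x i = DMSym.ra k) →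
    ∃ j : ℕ, 1 ≤ j ∧ Hfun x (i - (j : ℤ) + 1) = Hfun x (i + 1)}

/-- The set `B_β` of sequences in `Σ_D` in which every left bracket is closed. -/
def BbetaSet (M N : ℕ) : Set (ℤ → DMSym M N) :=
  SigmaD M N ∩ {x | ∀ i : ℤ, (∃ k, x i = DMSym.la k) →
    ∃ j : ℕ, 1 ≤ j ∧ Hfun x (i + (j : ℤ)) = Hfun x i}

/-- The alphabet `D_α ∪ D_0 ∪ {β}` of the full shift `Σ_α`. -/
inductive AlSym (M N : ℕ) : Type where
  | la : Fin M → AlSym M N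
  | u  : Fin N → AlSym M N
  | b  : AlSym M N
deriving DecidableEq

namespace AlSym

def equivSum (M N : ℕ) : AlSym M N ≃ (Fin M ⊕ Fin N ⊕ Unit) where
  toFun s := match s with
    | .la k => Sum.inl k
    | .u k => Sum.inr (Sum.inl k)
    | .b => Sum.inr (Sum.inr ())
  invFun s := match s with
    | Sum.inl k => .la k
    | Sum.inr (Sum.inl k) => .u k
    | Sum.inr (Sum.inr _) => .b
  left_inv s := by cases s <;> rfl
  right_inv s := by rcases s with k | k | k <;> rfl

instance (M N : ℕ) : Fintype (AlSym M N) := Fintype.ofEquiv _ (equivSum M N).symm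
instance (M N : ℕ) : TopologicalSpace (AlSym M N) := ⊥
instance (M N : ℕ) : DiscreteTopology (AlSym M N) := ⟨rfl⟩
instance (M N : ℕ) : MeasurableSpace (AlSym M N) := ⊤
instance (M N : ℕ) : BorelSpace (AlSym M N) := ⟨borel_eq_top_of_discrete.symm⟩

end AlSym

/-- The factor map `φ_α : Σ_D → Σ_α` replacing every right bracket by the single symbol `β`. -/
def phiAl {M N : ℕ} (x : ℤ → DMSym M N) : ℤ → AlSym M N := fun i =>
  match x i with
  | .la k => .la k
  | .u k => .u k
  | .ra _ => .b

/-- `K_α = φ_α(B_α)`. -/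
def Kalpha (M N : ℕ) : Set (ℤ → AlSym M N) := phiAl '' BalphaSet M N

/-- `G_{α,j}`. -/
def GAl {M N : ℕ} (y : ℤ → AlSym M N) (j : ℤ) : ℤ :=
  match y j with
  | .la _ => 1
  | .u _ => 0
  | .b => -1

/-- `H_{α,i}`. -/
def HAl {M N : ℕ} (y : ℤ → AlSym M N) (i : ℤ) : ℤ :=
  if 0 ≤ i then ∑ j ∈ Finset.range i.toNat, GAl y (j : ℤ)
  else -∑ j ∈ Finset.range (-i).toNat, GAl y (i + (j : ℤ))

/-- `s_α(i,y) = max { j < i+1 : H_{α,j}(y) = H_{α,i+1}(y) }`. -/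
noncomputable def sAl {M N : ℕ} (y : ℤ → AlSym M N) (i : ℤ) : ℤ :=
  sSup {j : ℤ | j < i + 1 ∧ HAl y j = HAl y (i + 1)}

/-- `ψ_α : K_α → Σ_D`, replacing each `β` by the right bracket matching the left bracket at
position `s_α(i,y)` (defined as a total function using a junk value outside `K_α`). -/
noncomputable def psiAl (M N : ℕ) (hM : 0 < M) (y : ℤ → AlSym M N) : ℤ → DMSym M N := fun i =>
  match y i with
  | .la k => .la k
  | .u k => .u k
  | .b =>
    match y (sAl y i) with
    | .la k => .ra k
    | _ => .ra ⟨0, hM⟩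

/-- The function `E_α = 2·𝟙_{Σ_α(α)} + 𝟙_{Σ_α(0)}`. -/
def EAl {M N : ℕ} (y : ℤ → AlSym M N) : ℝ :=
  match y 0 with
  | .la _ => 2
  | .u _ => 1
  | .b => 0

/-- The alphabet `{α} ∪ D_0 ∪ D_β` of the full shift `Σ_β`. -/
inductive BeSym (M N : ℕ) : Type where
  | a  : BeSym M N
  | u  : Fin N → BeSym M N
  | ra : Fin M → BeSym M N
deriving DecidableEq

namespace BeSym

def equivSum (M N : ℕ) : BeSym M N ≃ (Unit ⊕ Fin N ⊕ Fin M) where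
  toFun s := match s with
    | .a => Sum.inl ()
    | .u k => Sum.inr (Sum.inl k)
    | .ra k => Sum.inr (Sum.inr k)
  invFun s := match s with
    | Sum.inl _ => .a
    | Sum.inr (Sum.inl k) => .u k
    | Sum.inr (Sum.inr k) => .ra k
  left_inv s := by cases s <;> rfl
  right_inv s := by rcases s with k | k | k <;> rfl

instance (M N : ℕ) : Fintype (BeSym M N) := Fintype.ofEquiv _ (equivSum M N).symm
instance (M N : ℕ) : TopologicalSpace (BeSym M N) := ⊥
instance (M N : ℕ) : DiscreteTopology (BeSym M N) := ⟨rfl⟩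
instance (M N : ℕ) : MeasurableSpace (BeSym M N) := ⊤
instance (M N : ℕ) : BorelSpace (BeSym M N) := ⟨borel_eq_top_of_discrete.symm⟩

end BeSym

/-- The factor map `φ_β : Σ_D → Σ_β` replacing every left bracket by the single symbol `α`. -/
def phiBe {M N : ℕ} (x : ℤ → DMSym M N) : ℤ → BeSym M N := fun i =>
  match x i with
  | .la _ => .a
  | .u k => .u k
  | .ra k => .ra k

/-- `K_β = φ_β(B_β)`. -/
def Kbeta (M N : ℕ) : Set (ℤ → BeSym M N) := phiBe '' BbetaSet M N

/-- `G_{β,j}`. -/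
def GBe {M N : ℕ} (y : ℤ → BeSym M N) (j : ℤ) : ℤ :=
  match y j with
  | .a => 1
  | .u _ => 0
  | .ra _ => -1

/-- `H_{β,i}`. -/
def HBe {M N : ℕ} (y : ℤ → BeSym M N) (i : ℤ) : ℤ :=
  if 0 ≤ i then ∑ j ∈ Finset.range i.toNat, GBe y (j : ℤ)
  else -∑ j ∈ Finset.range (-i).toNat, GBe y (i + (j : ℤ))

/-- `s_β(i,y) = min { j > i : H_{β,j}(y) = H_{β,i}(y) }`. -/
noncomputable def sBe {M N : ℕ} (y : ℤ → BeSym M N) (i : ℤ) : ℤ :=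
  sInf {j : ℤ | i < j ∧ HBe y j = HBe y i}

/-- `ψ_β : K_β → Σ_D`, replacing each `α` by the left bracket matching the right bracket at
position `s_β(i,y)` (defined as a total function using a junk value outside `K_β`). -/
noncomputable def psiBe (M N : ℕ) (hM : 0 < M) (y : ℤ → BeSym M N) : ℤ → DMSym M N := fun i =>
  match y i with
  | .a =>
    match y (sBe y i) with
    | .ra k => .la k
    | _ => .la ⟨0, hM⟩
  | .u k => .u k
  | .ra k => .ra k

/-- The function `E_β = 2·𝟙_{Σ_β(β)} + 𝟙_{Σ_β(0)}`. -/
def EBe {M N : ℕ} (y : ℤ → BeSym M N) : ℝ :=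
  match y 0 with
  | .a => 0
  | .u _ => 1
  | .ra _ => 2


/-! ### Auxiliary machinery for the density proof -/

section AuxDense

/-- Push onto an infinite stack. -/
def pushS {M : ℕ} (k : Fin M) (s : ℕ → Fin M) : ℕ → Fin M
  | 0 => k
  | m + 1 => s m

/-- Pop an infinite stack. -/
def popS {M : ℕ} (s : ℕ → Fin M) : ℕ → Fin M := fun m => s (m + 1)

lemma popS_pushS {M : ℕ} (k : Fin M) (s : ℕ → Fin M) : popS (pushS k s) = s := rfl

lemma pushS_top_popS {M : ℕ} (s : ℕ → Fin M) : pushS (s 0) (popS s) = s := by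
  funext m; cases m <;> rfl

/-- The relation between consecutive infinite stacks along a sequence. -/
def StepRel {M N : ℕ} (s s' : ℕ → Fin M) (d : DMSym M N) : Prop :=
  (∃ k, d = .la k ∧ s' = pushS k s) ∨ (∃ k, d = .u k ∧ s' = s) ∨
    (d = .ra (s 0) ∧ s' = popS s)

/-- The invariant relating a Dyck normal form to an infinite stack. -/
def StkInv {M : ℕ} (st : DyckElem M) (s : ℕ → Fin M) : Prop :=
  ∃ bs as : List (Fin M), st = some (bs, as) ∧
    ∀ (m : ℕ) (hm : m < as.length), as.reverse[m]'(by simpa using hm) = s m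

lemma stkInv_step {M N : ℕ} {st : DyckElem M} {s s' : ℕ → Fin M} {d : DMSym M N}
    (hrel : StepRel s s' d) (hp : StkInv st s) : StkInv (dyckStep st d) s' := by
  obtain ⟨bs, as, rfl, hinv⟩ := hp
  rcases hrel with ⟨k, rfl, rfl⟩ | ⟨k, rfl, rfl⟩ | ⟨rfl, rfl⟩
  · refine ⟨bs, as ++ [k], rfl, ?_⟩
    intro m hm
    rcases m with _ | m
    · simp [pushS]
    · have hm' : m < as.length := by simpa using hm
      have := hinv m hm'
      simp only [List.reverse_append, List.reverse_singleton, List.singleton_append,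
        List.getElem_cons_succ]
      simpa [pushS] using this
  · exact ⟨bs, as, rfl, hinv⟩
  · rcases as.eq_nil_or_concat with rfl | ⟨as', a, rfl⟩
    · exact ⟨bs ++ [s 0], [], by simp [dyckStep], by simp⟩
    · have ha : a = s 0 := by
        have := hinv 0 (by simp)
        simpa using this
      refine ⟨bs, as', ?_, ?_⟩
      · simp [dyckStep, List.getLast?_concat, ha]
      · intro m hm
        have := hinv (m + 1) (by simpa using Nat.succ_lt_succ hm)
        simpa [List.reverse_concat, popS] using this

lemma flatMap_singleton_map {A B : Type*} (l : List A) (f : A → B) :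
    (l.flatMap fun a => [f a]) = l.map f := by
  induction l with
  | nil => rfl
  | cons a l ih => simp [List.flatMap_cons, ih]

lemma red_concat {M N : ℕ} (w : List (DMSym M N)) (d : DMSym M N) :
    red (w ++ [d]) = dyckStep (red w) d := by
  simp [red, List.foldl_append]

lemma mem_SigmaD_of_chain {M N : ℕ} (x : ℤ → DMSym M N) (S : ℤ → ℕ → Fin M)
    (h : ∀ i, StepRel (S i) (S (i + 1)) (x i)) : x ∈ SigmaD M N := by
  have key : ∀ (j : ℤ) (L : ℕ),
      StkInv (red ((List.range L).map fun t : ℕ => x (j + (t : ℤ)))) (S (j + L)) := by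
    intro j L
    induction L with
    | zero => exact ⟨[], [], rfl, by simp⟩
    | succ L ih =>
      rw [List.range_succ, List.map_append, List.map_singleton, red_concat]
      have hrel := h (j + L)
      have hEq : (j + (L : ℤ)) + 1 = j + ((L + 1 : ℕ) : ℤ) := by push_cast; ring
      rw [hEq] at hrel
      exact stkInv_step hrel ih
  intro j k _
  obtain ⟨bs, as, hst, -⟩ := key j (k + 1 - j).toNat
  have hw : wordAt x j k = (List.range (k + 1 - j).toNat).map fun t : ℕ => x (j + (t : ℤ)) := by
    simp only [wordAt, List.bind_eq_flatMap, List.pure_def]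
    induction (k + 1 - j).toNat with
    | zero => rfl
    | succ L ih => rw [List.range_succ]; simp_all
  rw [hw, hst]
  exact Option.some_ne_none _

lemma Gfun_le_one {M N : ℕ} (x : ℤ → DMSym M N) (j : ℤ) : Gfun x j ≤ 1 := by
  rcases h : x j with k | k | k <;> simp [Gfun, h]

lemma neg_one_le_Gfun {M N : ℕ} (x : ℤ → DMSym M N) (j : ℤ) : -1 ≤ Gfun x j := by
  rcases h : x j with k | k | k <;> simp [Gfun, h]

lemma Hfun_succ {M N : ℕ} (x : ℤ → DMSym M N) (i : ℤ) :
    Hfun x (i + 1) = Hfun x i + Gfun x i := by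
  unfold Hfun
  rcases lt_trichotomy i (-1) with h | h | h
  · rw [if_neg (by omega), if_neg (by omega)]
    have h1 : (-i).toNat = (-(i + 1)).toNat + 1 := by omega
    rw [h1, Finset.sum_range_succ']
    have h2 : ∀ j ∈ Finset.range (-(i + 1)).toNat,
        Gfun x (i + ((j + 1 : ℕ) : ℤ)) = Gfun x ((i + 1) + (j : ℕ)) := by
      intro j _; congr 1; push_cast; ring
    rw [Finset.sum_congr rfl h2]
    have h3 : Gfun x (i + ((0 : ℕ) : ℤ)) = Gfun x i := by norm_num
    rw [h3]
    omega
  · subst h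
    norm_num [Finset.sum_range_one]
  · rw [if_pos (by omega), if_pos (by omega)]
    have h1 : (i + 1).toNat = i.toNat + 1 := by omega
    rw [h1, Finset.sum_range_succ]
    have h3 : Gfun x ((i.toNat : ℕ) : ℤ) = Gfun x i := by congr 1; omega
    rw [h3]

lemma H_left_tail {M N : ℕ} (x : ℤ → DMSym M N) (b : ℤ)
    (hb : ∀ i < b, Gfun x i = 1) (t : ℕ) : Hfun x (b - t) = Hfun x b - t := by
  induction t with
  | zero => simp
  | succ t ih =>
    have h1 := Hfun_succ x (b - ((t : ℤ) + 1))
    rw [show b - ((t : ℤ) + 1) + 1 = b - t by ring] at h1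
    have h2 : Gfun x (b - ((t : ℤ) + 1)) = 1 := hb _ (by omega)
    push_cast
    omega

lemma H_right_tail {M N : ℕ} (x : ℤ → DMSym M N) (b : ℤ)
    (hb : ∀ i, b ≤ i → Gfun x i = -1) (t : ℕ) : Hfun x (b + t) = Hfun x b - t := by
  induction t with
  | zero => simp
  | succ t ih =>
    have h1 := Hfun_succ x (b + t)
    have h2 : Gfun x (b + t) = -1 := hb _ (by omega)
    rw [show b + ((t + 1 : ℕ) : ℤ) = (b + t) + 1 by push_cast; ring]
    push_cast
    omega

lemma ivt_up (f : ℕ → ℤ) (hstep : ∀ t, f (t + 1) ≤ f t + 1) (c : ℤ) :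
    ∀ m, f 0 ≤ c → c < f m → ∃ t < m, f t = c := by
  intro m
  induction m with
  | zero => intro h1 h2; omega
  | succ m ih =>
    intro h1 h2
    by_cases hc : c < f m
    · obtain ⟨t, ht, h⟩ := ih h1 hc; exact ⟨t, by omega, h⟩
    · exact ⟨m, by omega, by have := hstep m; omega⟩

/-! #### The `α` construction -/

/-- The window content of `y`, padded with left brackets. -/
def yyA {M N : ℕ} (hM : 0 < M) (y : ℤ → AlSym M N) (n t : ℕ) : AlSym M N :=
  if t ≤ 2 * n then y (-(n : ℤ) + t) else .la ⟨0, hM⟩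

/-- One step of the left-to-right lifting of `Σ_α`-symbols. -/
def stepA {M N : ℕ} (s : ℕ → Fin M) : AlSym M N → DMSym M N × (ℕ → Fin M)
  | .la k => (.la k, pushS k s)
  | .u k => (.u k, s)
  | .b => (.ra (s 0), popS s)

/-- The stack stream of the `α` construction. -/
def stkA {M N : ℕ} (hM : 0 < M) (y : ℤ → AlSym M N) (n : ℕ) : ℕ → ℕ → Fin M
  | 0 => fun _ => ⟨0, hM⟩
  | t + 1 => (stepA (stkA hM y n t) (yyA hM y n t)).2

/-- The stack stream of the `α` construction, indexed by `ℤ`. -/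
def SA {M N : ℕ} (hM : 0 < M) (y : ℤ → AlSym M N) (n : ℕ) (i : ℤ) : ℕ → Fin M :=
  stkA hM y n (i + n).toNat

/-- The approximating sequence of the `α` construction. -/
def xA {M N : ℕ} (hM : 0 < M) (y : ℤ → AlSym M N) (n : ℕ) : ℤ → DMSym M N := fun i =>
  if -(n : ℤ) ≤ i then (stepA (SA hM y n i) (yyA hM y n (i + n).toNat)).1 else .la ⟨0, hM⟩

lemma stepA_rel {M N : ℕ} (s : ℕ → Fin M) (a : AlSym M N) :
    StepRel s (stepA s a).2 (stepA s a).1 := by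
  cases a
  · exact Or.inl ⟨_, rfl, rfl⟩
  · exact Or.inr (Or.inl ⟨_, rfl, rfl⟩)
  · exact Or.inr (Or.inr ⟨rfl, rfl⟩)

lemma const_eq_pushS {M : ℕ} (k : Fin M) : (fun _ : ℕ => k) = pushS k (fun _ => k) := by
  funext m; cases m <;> rfl

lemma chainA {M N : ℕ} (hM : 0 < M) (y : ℤ → AlSym M N) (n : ℕ) (i : ℤ) :
    StepRel (SA hM y n i) (SA hM y n (i + 1)) (xA hM y n i) := by
  by_cases hi : -(n : ℤ) ≤ i
  · have ht : (i + 1 + (n : ℤ)).toNat = (i + (n : ℤ)).toNat + 1 := by omega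
    rw [xA, if_pos hi, SA, SA, ht, stkA]
    exact stepA_rel _ _
  · have h0 : (i + (n : ℤ)).toNat = 0 := by omega
    have h1 : (i + 1 + (n : ℤ)).toNat = 0 := by omega
    rw [xA, if_neg hi, SA, SA, h0, h1, stkA]
    exact Or.inl ⟨_, rfl, const_eq_pushS _⟩

lemma xA_mem_SigmaD {M N : ℕ} (hM : 0 < M) (y : ℤ → AlSym M N) (n : ℕ) :
    xA hM y n ∈ SigmaD M N :=
  mem_SigmaD_of_chain _ _ (chainA hM y n)

lemma xA_left {M N : ℕ} (hM : 0 < M) (y : ℤ → AlSym M N) (n : ℕ) (i : ℤ)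
    (hi : i < -(n : ℤ)) : xA hM y n i = .la ⟨0, hM⟩ := by
  rw [xA, if_neg (by omega)]

lemma xA_right {M N : ℕ} (hM : 0 < M) (y : ℤ → AlSym M N) (n : ℕ) (i : ℤ)
    (hi : (n : ℤ) < i) : xA hM y n i = .la ⟨0, hM⟩ := by
  rw [xA, if_pos (by omega), yyA, if_neg (by omega), stepA]

lemma GA_left {M N : ℕ} (hM : 0 < M) (y : ℤ → AlSym M N) (n : ℕ) :
    ∀ i < -(n : ℤ), Gfun (xA hM y n) i = 1 := by
  intro i hi
  rw [Gfun, xA_left hM y n i hi]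

lemma xA_mem_Balpha {M N : ℕ} (hM : 0 < M) (y : ℤ → AlSym M N) (n : ℕ) :
    xA hM y n ∈ BalphaSet M N := by
  refine ⟨xA_mem_SigmaD hM y n, ?_⟩
  rintro i ⟨k, hik⟩
  set x := xA hM y n with hx
  have hG : Gfun x i = -1 := by rw [Gfun, hik]
  have hH1 : Hfun x (i + 1) = Hfun x i - 1 := by rw [Hfun_succ, hG]; ring
  have hin : -(n : ℤ) ≤ i := by
    by_contra h
    rw [hx, xA_left hM y n i (by omega)] at hik
    exact absurd hik (by simp)
  set c : ℤ := Hfun x i - 1 with hc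
  set T : ℕ := (Hfun x (-(n : ℤ)) - c).toNat with hT
  have htail : Hfun x (-(n : ℤ) - T) = Hfun x (-(n : ℤ)) - T :=
    H_left_tail x (-(n : ℤ)) (GA_left hM y n) T
  set i0 : ℤ := -(n : ℤ) - T with hi0
  have hle : Hfun x i0 ≤ c := by rw [hi0, htail]; omega
  have hi0i : i0 ≤ i := by omega
  set m : ℕ := (i - i0).toNat with hm
  have him : i0 + (m : ℤ) = i := by omega
  have hstep : ∀ t : ℕ, Hfun x (i0 + (t + 1 : ℕ)) ≤ Hfun x (i0 + (t : ℕ)) + 1 := by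
    intro t
    have h1 := Hfun_succ x (i0 + (t : ℕ))
    have h2 := Gfun_le_one x (i0 + (t : ℕ))
    have h3 : i0 + ((t + 1 : ℕ) : ℤ) = (i0 + (t : ℕ)) + 1 := by push_cast; ring
    rw [h3, h1]
    omega
  obtain ⟨t, htm, hft⟩ := ivt_up (fun t => Hfun x (i0 + (t : ℕ))) hstep c m
    (by simpa using hle) (by show c < Hfun x (i0 + (m : ℤ)); rw [him]; omega)
  refine ⟨(i - (i0 + t) + 1).toNat, by omega, ?_⟩
  have h4 : i - ((i - (i0 + (t : ℤ)) + 1).toNat : ℤ) + 1 = i0 + t := by omega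
  rw [h4, hH1]
  simpa using hft

lemma phiAl_xA {M N : ℕ} (hM : 0 < M) (y : ℤ → AlSym M N) (n : ℕ) (i : ℤ)
    (h1 : -(n : ℤ) ≤ i) (h2 : i ≤ (n : ℤ)) : phiAl (xA hM y n) i = y i := by
  have hyy : yyA hM y n (i + n).toNat = y i := by
    rw [yyA, if_pos (by omega)]
    congr 1
    omega
  have hx : xA hM y n i = (stepA (SA hM y n i) (y i)).1 := by
    rw [xA, if_pos h1, hyy]
  rcases h : y i with k | k | k <;> simp [phiAl, hx, h, stepA]

/-! #### The `β` construction -/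

/-- The window content of `y` read right-to-left, padded with right brackets. -/
def yyB {M N : ℕ} (hM : 0 < M) (y : ℤ → BeSym M N) (n t : ℕ) : BeSym M N :=
  if t ≤ 2 * n then y ((n : ℤ) - t) else .ra ⟨0, hM⟩

/-- One step of the right-to-left lifting of `Σ_β`-symbols. -/
def stepB {M N : ℕ} (s : ℕ → Fin M) : BeSym M N → DMSym M N × (ℕ → Fin M)
  | .a => (.la (s 0), popS s)
  | .u k => (.u k, s)
  | .ra k => (.ra k, pushS k s)

/-- The stack stream of the `β` construction (built right-to-left). -/
def stkB {M N : ℕ} (hM : 0 < M) (y : ℤ → BeSym M N) (n : ℕ) : ℕ → ℕ → Fin M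
  | 0 => fun _ => ⟨0, hM⟩
  | t + 1 => (stepB (stkB hM y n t) (yyB hM y n t)).2

/-- The stack stream of the `β` construction, indexed by `ℤ`. -/
def SB {M N : ℕ} (hM : 0 < M) (y : ℤ → BeSym M N) (n : ℕ) (i : ℤ) : ℕ → Fin M :=
  stkB hM y n ((n : ℤ) + 1 - i).toNat

/-- The approximating sequence of the `β` construction. -/
def xB {M N : ℕ} (hM : 0 < M) (y : ℤ → BeSym M N) (n : ℕ) : ℤ → DMSym M N := fun i =>
  if i ≤ (n : ℤ) then
    (stepB (stkB hM y n ((n : ℤ) - i).toNat) (yyB hM y n ((n : ℤ) - i).toNat)).1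
  else .ra ⟨0, hM⟩

lemma stepB_rel {M N : ℕ} (s' : ℕ → Fin M) (b : BeSym M N) :
    StepRel (stepB s' b).2 s' (stepB s' b).1 := by
  cases b
  · exact Or.inl ⟨s' 0, rfl, (pushS_top_popS s').symm⟩
  · exact Or.inr (Or.inl ⟨_, rfl, rfl⟩)
  · exact Or.inr (Or.inr ⟨rfl, rfl⟩)

lemma chainB {M N : ℕ} (hM : 0 < M) (y : ℤ → BeSym M N) (n : ℕ) (i : ℤ) :
    StepRel (SB hM y n i) (SB hM y n (i + 1)) (xB hM y n i) := by
  by_cases hi : i ≤ (n : ℤ)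
  · have ht1 : ((n : ℤ) + 1 - i).toNat = ((n : ℤ) - i).toNat + 1 := by omega
    have ht2 : ((n : ℤ) + 1 - (i + 1)).toNat = ((n : ℤ) - i).toNat := by omega
    rw [xB, if_pos hi, SB, SB, ht1, ht2, stkB]
    exact stepB_rel _ _
  · have h0 : ((n : ℤ) + 1 - i).toNat = 0 := by omega
    have h1 : ((n : ℤ) + 1 - (i + 1)).toNat = 0 := by omega
    rw [xB, if_neg hi, SB, SB, h0, h1, stkB]
    exact Or.inr (Or.inr ⟨rfl, rfl⟩)

lemma xB_mem_SigmaD {M N : ℕ} (hM : 0 < M) (y : ℤ → BeSym M N) (n : ℕ) :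
    xB hM y n ∈ SigmaD M N :=
  mem_SigmaD_of_chain _ _ (chainB hM y n)

lemma xB_right {M N : ℕ} (hM : 0 < M) (y : ℤ → BeSym M N) (n : ℕ) (i : ℤ)
    (hi : (n : ℤ) < i) : xB hM y n i = .ra ⟨0, hM⟩ := by
  rw [xB, if_neg (by omega)]

lemma GB_right {M N : ℕ} (hM : 0 < M) (y : ℤ → BeSym M N) (n : ℕ) :
    ∀ i, (n : ℤ) + 1 ≤ i → Gfun (xB hM y n) i = -1 := by
  intro i hi
  rw [Gfun, xB_right hM y n i (by omega)]

lemma xB_mem_Bbeta {M N : ℕ} (hM : 0 < M) (y : ℤ → BeSym M N) (n : ℕ) :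
    xB hM y n ∈ BbetaSet M N := by
  refine ⟨xB_mem_SigmaD hM y n, ?_⟩
  rintro i ⟨k, hik⟩
  set x := xB hM y n with hx
  have hG : Gfun x i = 1 := by rw [Gfun, hik]
  have hin : i ≤ (n : ℤ) := by
    by_contra h
    rw [hx, xB_right hM y n i (by omega)] at hik
    exact absurd hik (by simp)
  have hH1 : Hfun x (i + 1) = Hfun x i + 1 := by rw [Hfun_succ, hG]
  set T : ℕ := (Hfun x ((n : ℤ) + 1) - Hfun x i + 1).toNat with hT
  have htail : Hfun x ((n : ℤ) + 1 + T) = Hfun x ((n : ℤ) + 1) - T :=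
    H_right_tail x ((n : ℤ) + 1) (GB_right hM y n) T
  set m : ℕ := ((n : ℤ) + 1 + T - (i + 1)).toNat with hm
  have him : i + 1 + (m : ℤ) = (n : ℤ) + 1 + T := by omega
  have hstep : ∀ t : ℕ, -Hfun x (i + 1 + (t + 1 : ℕ)) ≤ -Hfun x (i + 1 + (t : ℕ)) + 1 := by
    intro t
    have h1 := Hfun_succ x (i + 1 + (t : ℕ))
    have h2 := neg_one_le_Gfun x (i + 1 + (t : ℕ))
    have h3 : i + 1 + ((t + 1 : ℕ) : ℤ) = (i + 1 + (t : ℕ)) + 1 := by push_cast; ring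
    rw [h3, h1]
    omega
  obtain ⟨t, htm, hft⟩ := ivt_up (fun t => -Hfun x (i + 1 + (t : ℕ))) hstep (-Hfun x i) m
    (by simp only [Nat.cast_zero, add_zero]; omega)
    (by show -Hfun x i < -Hfun x (i + 1 + (m : ℤ)); rw [him, htail]; omega)
  refine ⟨t + 1, by omega, ?_⟩
  have h4 : i + ((t + 1 : ℕ) : ℤ) = i + 1 + (t : ℕ) := by push_cast; ring
  rw [h4]
  have : -Hfun x (i + 1 + (t : ℕ)) = -Hfun x i := hft
  omega

lemma phiBe_xB {M N : ℕ} (hM : 0 < M) (y : ℤ → BeSym M N) (n : ℕ) (i : ℤ)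
    (h1 : -(n : ℤ) ≤ i) (h2 : i ≤ (n : ℤ)) : phiBe (xB hM y n) i = y i := by
  have hyy : yyB hM y n ((n : ℤ) - i).toNat = y i := by
    rw [yyB, if_pos (by omega)]
    congr 1
    omega
  have hxv : xB hM y n i = (stepB (stkB hM y n ((n : ℤ) - i).toNat) (y i)).1 := by
    rw [xB, if_pos h2, hyy]
  rcases h : y i with _ | k | k <;> simp [phiBe, hxv, h, stepB]

end AuxDense

/-- Lemma 2.3(b): for each `γ ∈ {α, β}`, the set `K_γ` is dense in the full shift `Σ_γ`. -/
theorem K_dense (M N : ℕ) (hM : 2 ≤ M) :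
    Dense (Kalpha M N) ∧ Dense (Kbeta M N) := by
  have hM0 : 0 < M := by omega
  constructor
  · intro y
    refine mem_closure_of_tendsto (f := fun n : ℕ => phiAl (xA hM0 y n)) (b := atTop) ?_ ?_
    · rw [tendsto_pi_nhds]
      intro i
      have hev : ∀ᶠ n : ℕ in atTop, phiAl (xA hM0 y n) i = y i := by
        filter_upwards [eventually_ge_atTop i.natAbs] with n hn
        exact phiAl_xA hM0 y n i (by omega) (by omega)
      exact Tendsto.congr' (hev.mono fun n h => h.symm) tendsto_const_nhds
    · exact Eventually.of_forall fun n => ⟨xA hM0 y n, xA_mem_Balpha hM0 y n, rfl⟩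
  · intro y
    refine mem_closure_of_tendsto (f := fun n : ℕ => phiBe (xB hM0 y n)) (b := atTop) ?_ ?_
    · rw [tendsto_pi_nhds]
      intro i
      have hev : ∀ᶠ n : ℕ in atTop, phiBe (xB hM0 y n) i = y i := by
        filter_upwards [eventually_ge_atTop i.natAbs] with n hn
        exact phiBe_xB hM0 y n i (by omega) (by omega)
      exact Tendsto.congr' (hev.mono fun n h => h.symm) tendsto_const_nhds
    · exact Eventually.of_forall fun n => ⟨xB hM0 y n, xB_mem_Bbeta hM0 y n, rfl⟩
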